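/- Let A and B be positive real numbers with B/A = 6/5, let π denote the prime counting function, and suppose that A·(x/log x) ≤ π(x) ≤ B·(x/log x) for all real x > 30. Let a > 6/5 be a real number and let p > max(30, a^(6/(5a−6))) be a prime. Then there exists a prime q with p < q ≤ a·p; in particular the smallest prime exceeding p is at most a·p. -/

import Mathlib

/-!
Write `c = B / A = 6 / 5`. Taking logarithms, `p > a ^ (c / (a - c))` is equivalent to
`c * log (a * p) < a * log p`, i.e. to `c * p / log p < a * p / log (a * p)`. Multiplying by `A`,
the upper Chebyshev bound at `p` and the lower one at `a * p` give `π p < π ⌊a * p⌋`,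
so some prime lies in `(p, a * p]`.
-/

open Real

namespace Nat

theorem exists_prime_of_primeCounting_lt {m n : ℕ} (h : primeCounting m < primeCounting n) :
    ∃ q : ℕ, q.Prime ∧ m < q ∧ q ≤ n := by
  obtain ⟨q, ⟨hmq, hqn⟩, hq⟩ := exists_of_count_lt_count h
  exact ⟨q, hq, hmq, Nat.le_of_lt_succ hqn⟩

theorem exists_prime_of_primeCounting_lt_floor {m : ℕ} {x : ℝ} (hx : 0 ≤ x)
    (h : primeCounting m < primeCounting ⌊x⌋₊) : ∃ q : ℕ, q.Prime ∧ m < q ∧ (q : ℝ) ≤ x := by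
  obtain ⟨q, hq, hmq, hqx⟩ := exists_prime_of_primeCounting_lt h
  exact ⟨q, hq, hmq, (le_floor_iff hx).mp hqx⟩

end Nat

theorem Real.mul_div_log_lt_div_log_mul {a c x : ℝ} (hca : c < a) (ha : 1 < a) (hx : 1 < x)
    (hxa : a ^ (c / (a - c)) < x) : c * (x / log x) < a * x / log (a * x) := by
  have hlogx : 0 < log x := log_pos hx
  have hlogax : log (a * x) = log a + log x := log_mul (by positivity) (by positivity)
  have hlog_sum : 0 < log a + log x := by linarith [log_pos ha]
  have hexp : c * log a < (a - c) * log x := by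
    have h := log_lt_log (rpow_pos_of_pos (by positivity) _) hxa
    rw [log_rpow (by positivity), div_mul_eq_mul_div, div_lt_iff₀ (by linarith)] at h
    linarith
  rw [hlogax, mul_div_assoc', div_lt_div_iff₀ hlogx hlog_sum]
  nlinarith [mul_lt_mul_of_pos_left hexp (by positivity : (0 : ℝ) < x)]

theorem stmt_4_general (A B : ℝ) (hA : 0 < A) (hBA : B / A = 6 / 5)
    (hpi : ∀ x : ℝ, 30 < x →
      A * (x / Real.log x) ≤ (Nat.primeCounting ⌊x⌋₊ : ℝ) ∧
        (Nat.primeCounting ⌊x⌋₊ : ℝ) ≤ B * (x / Real.log x))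
    (a : ℝ) (ha : 6 / 5 < a) (p : ℕ)
    (hplarge : max 30 (a ^ (6 / (5 * a - 6))) < (p : ℝ)) :
    ∃ q : ℕ, q.Prime ∧ p < q ∧ (q : ℝ) ≤ a * p := by
  obtain ⟨h30p, hap⟩ := max_lt_iff.mp hplarge
  have hB : B = 6 / 5 * A := by rw [← hBA, div_mul_cancel₀ B hA.ne']
  have hexp : (6 : ℝ) / (5 * a - 6) = 6 / 5 / (a - 6 / 5) := by field_simp
  rw [hexp] at hap
  have hbound := Real.mul_div_log_lt_div_log_mul ha (by linarith) (by linarith) hap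
  have hupper := (hpi p h30p).2
  rw [Nat.floor_natCast] at hupper
  have hlower := (hpi (a * p) (by nlinarith)).1
  have hcount : (p.primeCounting : ℝ) < Nat.primeCounting ⌊a * p⌋₊ := by
    calc (p.primeCounting : ℝ) ≤ A * (6 / 5 * (p / log p)) := hupper.trans_eq (by rw [hB]; ring)
      _ < A * (a * p / log (a * p)) := mul_lt_mul_of_pos_left hbound hA
      _ ≤ Nat.primeCounting ⌊a * p⌋₊ := hlower
  exact Nat.exists_prime_of_primeCounting_lt_floor (by positivity) (by exact_mod_cast hcount)

theorem stmt_4 (A B : ℝ) (hA : 0 < A) (hB : 0 < B) (hBA : B / A = 6 / 5)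
    (hpi : ∀ x : ℝ, 30 < x →
      A * (x / Real.log x) ≤ (Nat.primeCounting ⌊x⌋₊ : ℝ) ∧
        (Nat.primeCounting ⌊x⌋₊ : ℝ) ≤ B * (x / Real.log x))
    (a : ℝ) (ha : 6 / 5 < a) (p : ℕ) (hp : p.Prime)
    (hplarge : max 30 (a ^ (6 / (5 * a - 6))) < (p : ℝ)) :
    ∃ q : ℕ, q.Prime ∧ p < q ∧ (q : ℝ) ≤ a * p :=
  stmt_4_general A B hA hBA hpi a ha p hplarge
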